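/- Let $\rho \in (0,1)$ and $L \in \mathbb{N}$. Then $\int_0^{2^{-(L+1)}} \int_0^{2^{-(L+1)}} f_{\rho,L}(x,y)\,dy\,dx = 4^{-(L+1)} + \rho \cdot 4^{-L}\pi^{-2}$, which strictly exceeds $4^{-(L+1)} = \big(\int_0^{2^{-(L+1)}} 1\,dx\big)\big(\int_0^{2^{-(L+1)}} 1\,dy\big)$. In particular, if $(X,Y)$ has density $f_{\rho,L}$ with $\rho > 0$, then $X$ and $Y$ are not independent. -/

import Mathlib

open Real intervalIntegral

/-!
Separating variables, the integral of `1 + ρ sin (c x) sin (c y)` over `[0, a]²` is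
`a² + ρ (∫₀ᵃ sin (c x) dx)²`. On the half-period `a = π / c` the inner integral is `2 / c`, so the
excess over `a²` is `4ρ / c² > 0`.
-/

/-- The sinusoidal dependence density on the unit square. -/
noncomputable def sinDensity (ρ : ℝ) (L : ℕ) (x y : ℝ) : ℝ :=
  1 + ρ * Real.sin (2 ^ (L + 1) * Real.pi * x) * Real.sin (2 ^ (L + 1) * Real.pi * y)

theorem integral_sin_mul_of_mul_eq_pi {c a : ℝ} (hc : c ≠ 0) (hca : c * a = π) :
    ∫ x in (0:ℝ)..a, sin (c * x) = 2 / c := by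
  rw [integral_comp_mul_left sin hc, mul_zero, hca, integral_sin, cos_zero, cos_pi, smul_eq_mul]
  field_simp
  norm_num

theorem integral_integral_one_add_mul_mul (ρ : ℝ) {f g : ℝ → ℝ} (hf : Continuous f)
    (hg : Continuous g) (a b : ℝ) :
    ∫ x in (0:ℝ)..a, ∫ y in (0:ℝ)..b, 1 + ρ * f x * g y
      = a * b + ρ * (∫ x in (0:ℝ)..a, f x) * ∫ y in (0:ℝ)..b, g y := by
  have inner (x : ℝ) : ∫ y in (0:ℝ)..b, 1 + ρ * f x * g y
      = b + ρ * f x * ∫ y in (0:ℝ)..b, g y := by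
    rw [integral_add intervalIntegrable_const ((hg.intervalIntegrable _ _).const_mul _),
      integral_const_mul]
    simp
  simp_rw [inner, mul_assoc ρ]
  rw [integral_add intervalIntegrable_const
      (((hf.intervalIntegrable _ _).mul_const _).const_mul _),
    integral_const_mul, integral_mul_const]
  simp

theorem sinDensity_corner_cell_exceeds_product_general (ρ : ℝ) (hρ0 : 0 < ρ) (L : ℕ) :
    (∫ x in (0:ℝ)..(2 ^ (-((L : ℤ) + 1))), ∫ y in (0:ℝ)..(2 ^ (-((L : ℤ) + 1))),
        sinDensity ρ L x y)
      = 4 ^ (-((L : ℤ) + 1)) + ρ * 4 ^ (-(L : ℤ)) / Real.pi ^ 2 ∧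
    4 ^ (-((L : ℤ) + 1)) + ρ * 4 ^ (-(L : ℤ)) / Real.pi ^ 2 > (4 : ℝ) ^ (-((L : ℤ) + 1)) := by
  have hc : (2 : ℝ) ^ (L + 1) * π ≠ 0 := by positivity
  have side : (2 : ℝ) ^ (-((L : ℤ) + 1)) = ((2 : ℝ) ^ (L + 1))⁻¹ := by
    rw [zpow_neg]; norm_cast
  have four_pow (n : ℕ) : (4 : ℝ) ^ (-(n : ℤ)) = (((2 : ℝ) ^ n) ^ 2)⁻¹ := by
    rw [zpow_neg, zpow_natCast, ← pow_mul, mul_comm, pow_mul]; norm_num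
  have hca : 2 ^ (L + 1) * π * 2 ^ (-((L : ℤ) + 1)) = π := by
    rw [side]; field_simp
  refine ⟨?_, lt_add_of_pos_right _ (by positivity)⟩
  simp only [sinDensity]
  rw [integral_integral_one_add_mul_mul ρ (by fun_prop) (by fun_prop),
    integral_sin_mul_of_mul_eq_pi hc hca, side, four_pow, ← Nat.cast_succ, four_pow]
  field_simp
  ring

theorem sinDensity_corner_cell_exceeds_product (ρ : ℝ) (hρ0 : 0 < ρ) (hρ1 : ρ < 1) (L : ℕ) :
    (∫ x in (0:ℝ)..(2 ^ (-((L : ℤ) + 1))), ∫ y in (0:ℝ)..(2 ^ (-((L : ℤ) + 1))),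
        sinDensity ρ L x y)
      = 4 ^ (-((L : ℤ) + 1)) + ρ * 4 ^ (-(L : ℤ)) / Real.pi ^ 2 ∧
    4 ^ (-((L : ℤ) + 1)) + ρ * 4 ^ (-(L : ℤ)) / Real.pi ^ 2 > (4 : ℝ) ^ (-((L : ℤ) + 1)) :=
  sinDensity_corner_cell_exceeds_product_general ρ hρ0 L
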